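/- arXiv:1909.06666 — 2 statements merged into one kernel-verified Lean document; each statement's English description precedes it below -/
import Mathlib

section
/- Let L/K be a finite Galois extension of fields of characteristic p > 0 with Galois group Γ, G a finite group, b a block idempotent of LG, and b̃ the corresponding block idempotent of KG (the sum of the distinct Γ-conjugates of b). Then b and b̃ have the same defect groups: a p-subgroup P of G is a defect group of b if and only if it is a defect group of b̃. -/
def IsBlockIdempotent {R : Type*} [Ring R] (b : R) : Prop :=
  b ∈ Set.center R ∧ IsIdempotentElem b ∧ b ≠ 0 ∧
    ∀ c₁ c₂ : R, c₁ ∈ Set.center R → c₂ ∈ Set.center R →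
      IsIdempotentElem c₁ → IsIdempotentElem c₂ → c₁ * c₂ = 0 → b = c₁ + c₂ →
        c₁ = 0 ∨ c₂ = 0

noncomputable def galAct {K L : Type*} [Field K] [Field L] [Algebra K L] {G : Type*}
    (γ : L ≃ₐ[K] L) (a : MonoidAlgebra L G) : MonoidAlgebra L G :=
  MonoidAlgebra.ofCoeff (Finsupp.mapRange γ (map_zero γ) a.coeff)

noncomputable def galOrbitSum (K : Type*) {L : Type*} [Field K] [Field L] [Algebra K L]
    [FiniteDimensional K L] {G : Type*} (b : MonoidAlgebra L G) : MonoidAlgebra L G :=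
  ∑ c ∈ (Set.toFinite (Set.range fun γ : L ≃ₐ[K] L => galAct γ b)).toFinset, c

/-- The Brauer homomorphism with respect to `P`, viewed as the projection of `kG` onto the
coefficients supported on the centralizer `C_G(P)`. -/
noncomputable def Br {k G : Type*} [Field k] [Group G] (P : Subgroup G)
    (a : MonoidAlgebra k G) : MonoidAlgebra k G :=
  @Finsupp.filter G k _ (· ∈ Subgroup.centralizer (P : Set G)) (Classical.decPred _) a.coeff |> MonoidAlgebra.ofCoeff

/-- `P` is a defect group of the block idempotent `c` of `kG`: `P` is a `p`-subgroup, maximal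
among the `p`-subgroups `Q` of `G` with `Br_Q(c) ≠ 0`. -/
def IsDefectGroup (p : ℕ) {k G : Type*} [Field k] [Group G] (c : MonoidAlgebra k G)
    (P : Subgroup G) : Prop :=
  IsPGroup p ↥P ∧ Br P c ≠ 0 ∧
    ∀ Q : Subgroup G, IsPGroup p ↥Q → P ≤ Q → Br Q c ≠ 0 → Q = P


/-! For a `p`-subgroup `Q`, the Brauer map `Br_Q` is multiplicative on `Q`-invariant elements:
in the coefficient of `g ∈ C_G(Q)` of a product, the terms indexed by `x ∉ C_G(Q)` are permuted
by `Q`-conjugation in orbits of size divisible by `p`, so they cancel. The orbit sum `b̃` is central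
with `b̃ b = b`, hence `Br_Q b = Br_Q b̃ * Br_Q b`, and `Br_Q b̃ = 0` forces `Br_Q b = 0`.
Conversely `Br_Q` commutes with the Galois action, so `Br_Q b = 0` kills every conjugate of `b`
and therefore `Br_Q b̃`. Finally `KG → LG` is injective and commutes with `Br_Q`, so `b`, `b̃` and
`b'` have nonzero Brauer image at exactly the same `p`-subgroups, hence the same defect groups. -/

open MulAction Finset

theorem IsPGroup.sum_filter_notMem_fixedPoints_eq_zero {p : ℕ} [Fact p.Prime]
    {Q α R : Type*} [Group Q] [MulAction Q α] [Fintype α] [Semiring R] [CharP R p]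
    [DecidablePred (· ∈ fixedPoints Q α)] (hQ : IsPGroup p Q) (f : α → R)
    (hf : ∀ (q : Q) (x : α), f (q • x) = f x) :
    ∑ x ∈ univ.filter (· ∉ fixedPoints Q α), f x = 0 := by
  classical
  refine sum_cancels_of_partition_cancels (orbitRel Q α) fun x hx => ?_
  have hx : x ∉ fixedPoints Q α := (mem_filter.mp hx).2
  have hfiber : (univ.filter (· ∉ fixedPoints Q α)).filter (fun a => orbitRel Q α a x) =
      (orbit Q x).toFinset := by
    ext a
    simp only [mem_filter, mem_univ, true_and, Set.mem_toFinset]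
    refine ⟨And.right, fun ha => ⟨fun hfix => hx ?_, ha⟩⟩
    obtain ⟨q, rfl⟩ := ha
    have hq := hfix q⁻¹
    rw [inv_smul_smul] at hq
    rwa [← hq] at hfix
  obtain ⟨n, hn⟩ := hQ.card_orbit x
  have hn0 : n ≠ 0 := by
    rintro rfl
    exact hx (mem_fixedPoints_iff_card_orbit_eq_one.mpr (by rwa [← Nat.card_eq_fintype_card]))
  have hconst : ∀ a ∈ (orbit Q x).toFinset, f a = f x := by
    intro a ha
    obtain ⟨q, rfl⟩ := Set.mem_toFinset.mp ha
    exact hf q x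
  rw [hfiber, sum_congr rfl hconst, sum_const, Set.toFinset_card, ← Nat.card_eq_fintype_card, hn,
    nsmul_eq_mul, Nat.cast_pow, CharP.cast_eq_zero, zero_pow hn0, zero_mul]

theorem mem_fixedPoints_map_toConjAct_iff {G : Type*} [Group G] {Q : Subgroup G} {x : G} :
    x ∈ fixedPoints (Q.map (ConjAct.toConjAct : G ≃* ConjAct G).toMonoidHom) G ↔
      x ∈ Subgroup.centralizer (Q : Set G) := by
  simp only [mem_fixedPoints, Subtype.forall, Subgroup.mem_map_equiv,
    Subgroup.mem_centralizer_iff]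
  refine ⟨fun h q hq => ?_, fun h c hc => ?_⟩
  · have hq' := h (ConjAct.toConjAct q) (by simpa using hq)
    rw [Submonoid.mk_smul, ConjAct.toConjAct_smul, mul_inv_eq_iff_eq_mul] at hq'
    exact hq'
  · rw [Submonoid.mk_smul, ConjAct.smul_def]
    exact mul_inv_eq_of_eq_mul (h _ hc)

theorem IsPGroup.sum_filter_notMem_centralizer_eq_zero {p : ℕ} [Fact p.Prime]
    {G R : Type*} [Group G] [Fintype G] [Semiring R] [CharP R p] {Q : Subgroup G}
    [DecidablePred (· ∈ Subgroup.centralizer (Q : Set G))] (hQ : IsPGroup p Q) (f : G → R)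
    (hf : ∀ q ∈ Q, ∀ x, f (q * x * q⁻¹) = f x) :
    ∑ x ∈ univ.filter (· ∉ Subgroup.centralizer (Q : Set G)), f x = 0 := by
  classical
  have hQ' := hQ.map (ConjAct.toConjAct : G ≃* ConjAct G).toMonoidHom
  rw [← hQ'.sum_filter_notMem_fixedPoints_eq_zero f fun q x => ?_]
  · simp only [mem_fixedPoints_map_toConjAct_iff]
  · exact hf _ (Subgroup.mem_map_equiv.mp q.2) x

namespace MonoidAlgebra

theorem coeff_mul_eq_sum {R G : Type*} [Semiring R] [Group G] [Fintype G] (a b : R[G])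
    (g : G) :
    (a * b).coeff g = ∑ x, a.coeff x * b.coeff (x⁻¹ * g) := by
  rw [coeff_mul_apply_left, Finsupp.sum_fintype]
  simp

theorem coeff_conj_of_mem_center {R G : Type*} [Semiring R] [Group G] {a : R[G]}
    (ha : a ∈ Set.center R[G]) (h x : G) : a.coeff (h * x * h⁻¹) = a.coeff x := by
  have hcomm := congrArg (fun c : R[G] => c.coeff (h * x)) (ha.comm (single h 1))
  simpa [coeff_single_mul_apply, coeff_mul_single_apply] using hcomm

end MonoidAlgebra

open MonoidAlgebra

section Brauer

variable {k G : Type*} [Field k] [Group G] {Q : Subgroup G}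

theorem coeff_Br_of_mem {a : k[G]} {g : G} (hg : g ∈ Subgroup.centralizer (Q : Set G)) :
    (Br Q a).coeff g = a.coeff g := by
  classical exact Finsupp.filter_apply_pos _ _ hg

theorem coeff_Br_of_notMem {a : k[G]} {g : G} (hg : g ∉ Subgroup.centralizer (Q : Set G)) :
    (Br Q a).coeff g = 0 := by
  classical exact Finsupp.filter_apply_neg _ _ hg

theorem Br_mul {p : ℕ} [Fact p.Prime] [CharP k p] [Fintype G] (hQ : IsPGroup p Q) {a b : k[G]}
    (ha : ∀ q ∈ Q, ∀ x, a.coeff (q * x * q⁻¹) = a.coeff x)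
    (hb : ∀ q ∈ Q, ∀ x, b.coeff (q * x * q⁻¹) = b.coeff x) :
    Br Q (a * b) = Br Q a * Br Q b := by
  classical
  set C := Subgroup.centralizer (Q : Set G)
  ext g
  by_cases hg : g ∈ C
  · have hnoncentral : ∑ x ∈ univ.filter (· ∉ C), a.coeff x * b.coeff (x⁻¹ * g) = 0 := by
      refine hQ.sum_filter_notMem_centralizer_eq_zero _ fun q hq x => ?_
      have hconj : (q * x * q⁻¹)⁻¹ * g = q * (x⁻¹ * g) * q⁻¹ := by
        have hgq : q⁻¹ * g = g * q⁻¹ := Subgroup.mem_centralizer_iff.mp hg q⁻¹ (Q.inv_mem hq)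
        simp only [mul_inv_rev, inv_inv, mul_assoc, hgq]
      rw [hconj, ha q hq, hb q hq]
    have hcentral : ∀ x ∈ univ.filter (· ∈ C),
        a.coeff x * b.coeff (x⁻¹ * g) = (Br Q a).coeff x * (Br Q b).coeff (x⁻¹ * g) := by
      intro x hx
      have hx : x ∈ C := (mem_filter.mp hx).2
      rw [coeff_Br_of_mem hx, coeff_Br_of_mem (C.mul_mem (C.inv_mem hx) hg)]
    have hBr_noncentral : ∀ x ∈ univ.filter (· ∉ C),
        (Br Q a).coeff x * (Br Q b).coeff (x⁻¹ * g) = 0 := fun x hx => by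
      rw [coeff_Br_of_notMem (mem_filter.mp hx).2, zero_mul]
    rw [coeff_Br_of_mem hg, coeff_mul_eq_sum, coeff_mul_eq_sum,
      ← sum_filter_add_sum_filter_not univ (· ∈ C), hnoncentral, add_zero,
      sum_congr rfl hcentral, ← sum_filter_add_sum_filter_not univ (· ∈ C),
      sum_eq_zero hBr_noncentral, add_zero]
  · rw [coeff_Br_of_notMem hg, coeff_mul_eq_sum]
    refine (sum_eq_zero fun x _ => ?_).symm
    by_cases hx : x ∈ C
    · have hxg : x⁻¹ * g ∉ C := fun hxg => hg (by simpa using C.mul_mem hx hxg)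
      rw [coeff_Br_of_notMem hxg, mul_zero]
    · rw [coeff_Br_of_notMem hx, zero_mul]

theorem Br_sum {ι : Type*} (s : Finset ι) (a : ι → k[G]) :
    Br Q (∑ i ∈ s, a i) = ∑ i ∈ s, Br Q (a i) := by
  ext g
  by_cases hg : g ∈ Subgroup.centralizer (Q : Set G)
  · simp only [coeff_Br_of_mem hg, coeff_sum, Finsupp.finsetSum_apply]
  · simp only [coeff_Br_of_notMem hg, coeff_sum, Finsupp.finsetSum_apply, sum_const_zero]

theorem Br_map {l : Type*} [Field l] (f : k →+ l) (a : k[G]) :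
    Br Q (map f a) = map f (Br Q a) := by
  ext g
  by_cases hg : g ∈ Subgroup.centralizer (Q : Set G)
  · simp only [coeff_Br_of_mem hg, coeff_map, Finsupp.mapRange_apply]
  · simp only [coeff_Br_of_notMem hg, coeff_map, Finsupp.mapRange_apply, map_zero]

end Brauer

section BlockIdempotent

variable {R : Type*} [Ring R] {b e : R}

theorem IsBlockIdempotent.eq_zero_or_eq (hb : IsBlockIdempotent b) (he : e ∈ Set.center R)
    (he' : IsIdempotentElem e) (hbe : b * e = e) : e = 0 ∨ e = b := by
  have heb : e * b = e := (he.comm b).eq.trans hbe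
  have hsub : b - e ∈ Set.center R := (Subring.center R).sub_mem hb.1 he
  have horth : e * (b - e) = 0 := by rw [mul_sub, heb, he'.eq, sub_self]
  rcases hb.2.2.2 e (b - e) he hsub he' (he'.sub hb.2.1 heb hbe) horth (add_sub_cancel e b).symm
    with h | h
  · exact Or.inl h
  · exact Or.inr (sub_eq_zero.mp h).symm

theorem IsBlockIdempotent.mul_eq_zero_of_ne {c : R} (hb : IsBlockIdempotent b)
    (hc : IsBlockIdempotent c) (hbc : b ≠ c) : b * c = 0 := by
  have hcenter : b * c ∈ Set.center R := Set.mul_mem_center hb.1 hc.1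
  have hidem : IsIdempotentElem (b * c) := hb.2.1.mul_of_commute (hc.1.comm b).symm hc.2.1
  have hb_mul : b * (b * c) = b * c := by rw [← mul_assoc, hb.2.1.eq]
  have hc_mul : c * (b * c) = b * c := by
    rw [← mul_assoc, (hc.1.comm b).eq, mul_assoc, hc.2.1.eq]
  rcases hb.eq_zero_or_eq hcenter hidem hb_mul with h | hb'
  · exact h
  rcases hc.eq_zero_or_eq hcenter hidem hc_mul with h | hc'
  · exact h
  · exact absurd (hb'.symm.trans hc') hbc

theorem IsBlockIdempotent.map {S : Type*} [Ring S] (e : R ≃+* S) (hb : IsBlockIdempotent b) :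
    IsBlockIdempotent (e b) := by
  obtain ⟨hcenter, hidem, hne, hprim⟩ := hb
  refine ⟨MulEquivClass.apply_mem_center e hcenter, hidem.map e,
    (map_ne_zero_iff e e.injective).mpr hne, fun c₁ c₂ hc₁ hc₂ hi₁ hi₂ hmul hsum => ?_⟩
  have hsum' : b = e.symm c₁ + e.symm c₂ := by rw [← map_add, ← hsum, e.symm_apply_apply]
  rcases hprim (e.symm c₁) (e.symm c₂) (MulEquivClass.apply_mem_center e.symm hc₁)
      (MulEquivClass.apply_mem_center e.symm hc₂) (hi₁.map e.symm) (hi₂.map e.symm)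
      (by rw [← map_mul, hmul, map_zero]) hsum' with h | h
  · exact Or.inl ((map_eq_zero_iff e.symm e.symm.injective).mp h)
  · exact Or.inr ((map_eq_zero_iff e.symm e.symm.injective).mp h)

theorem IsBlockIdempotent.sum_mul_of_mem {T : Finset R} (hT : ∀ c ∈ T, IsBlockIdempotent c)
    (hbT : b ∈ T) : (∑ c ∈ T, c) * b = b := by
  have hb := hT b hbT
  rw [sum_mul, sum_eq_single_of_mem b hbT fun c hc hcb => (hT c hc).mul_eq_zero_of_ne hb hcb,
    hb.2.1.eq]

end BlockIdempotent

section Galois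

variable {K L : Type*} [Field K] [Field L] [Algebra K L] {G : Type*}

theorem mem_galOrbit_iff [FiniteDimensional K L] {b c : L[G]} :
    c ∈ (Set.toFinite (Set.range fun γ : L ≃ₐ[K] L => galAct γ b)).toFinset ↔
      ∃ γ : L ≃ₐ[K] L, galAct γ b = c :=
  Set.Finite.mem_toFinset _

variable [Group G]

theorem galAct_eq_mapAlgEquiv (γ : L ≃ₐ[K] L) (a : L[G]) :
    galAct γ a = mapAlgEquiv K G γ a := by
  ext
  simp [galAct]

theorem IsBlockIdempotent.galAct {b : L[G]} (hb : IsBlockIdempotent b) (γ : L ≃ₐ[K] L) :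
    IsBlockIdempotent (galAct γ b) := by
  rw [galAct_eq_mapAlgEquiv]
  exact hb.map (mapAlgEquiv K G γ).toRingEquiv

theorem Br_galAct (Q : Subgroup G) (γ : L ≃ₐ[K] L) (a : L[G]) :
    Br Q (galAct γ a) = galAct γ (Br Q a) :=
  Br_map (γ : L →+ L) a

variable (K) [FiniteDimensional K L]

theorem galOrbitSum_mul_self {b : L[G]} (hb : IsBlockIdempotent b) :
    galOrbitSum K b * b = b := by
  refine IsBlockIdempotent.sum_mul_of_mem (fun c hc => ?_) (mem_galOrbit_iff.mpr ⟨.refl, ?_⟩)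
  · obtain ⟨γ, rfl⟩ := mem_galOrbit_iff.mp hc
    exact hb.galAct γ
  · ext
    simp [galAct]

theorem galOrbitSum_mem_center {b : L[G]} (hb : IsBlockIdempotent b) :
    galOrbitSum K b ∈ Set.center L[G] := by
  refine (Subring.center L[G]).sum_mem fun c hc => ?_
  obtain ⟨γ, rfl⟩ := mem_galOrbit_iff.mp hc
  exact (hb.galAct γ).1

theorem Br_galOrbitSum_eq_zero_iff {p : ℕ} [Fact p.Prime] [CharP L p] [Fintype G]
    {Q : Subgroup G} (hQ : IsPGroup p Q) {b : L[G]} (hb : IsBlockIdempotent b) :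
    Br Q (galOrbitSum K b) = 0 ↔ Br Q b = 0 := by
  refine ⟨fun h => ?_, fun h => ?_⟩
  · rw [← galOrbitSum_mul_self K hb, Br_mul hQ (fun q _ => coeff_conj_of_mem_center
      (galOrbitSum_mem_center K hb) q) (fun q _ => coeff_conj_of_mem_center hb.1 q), h, zero_mul]
  · rw [galOrbitSum, Br_sum]
    refine sum_eq_zero fun c hc => ?_
    obtain ⟨γ, rfl⟩ := mem_galOrbit_iff.mp hc
    rw [Br_galAct, h, galAct_eq_mapAlgEquiv, map_zero]

end Galois

theorem isDefectGroup_iff_of_Br_ne_zero_iff {p : ℕ} {k k' G : Type*} [Field k] [Field k']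
    [Group G] {c : k[G]} {d : k'[G]}
    (h : ∀ Q : Subgroup G, IsPGroup p Q → (Br Q c ≠ 0 ↔ Br Q d ≠ 0)) (P : Subgroup G) :
    IsDefectGroup p c P ↔ IsDefectGroup p d P :=
  and_congr_right fun hP => and_congr (h P hP) <| forall_congr' fun Q => forall_congr' fun hQ =>
    imp_congr_right fun _ => imp_congr_left (h Q hQ)

theorem block_and_galOrbitSum_same_defect_groups_general
    (p : ℕ) [Fact p.Prime]
    (K L : Type*) [Field K] [Field L] [Algebra K L] [FiniteDimensional K L]
    [CharP L p]
    (G : Type*) [Group G] [Fintype G]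
    (b : MonoidAlgebra L G) (hb : IsBlockIdempotent b)
    (b' : MonoidAlgebra K G)
    (hb' : Finsupp.mapRange (algebraMap K L) (map_zero _) b'.coeff = (galOrbitSum K b).coeff)
    (P : Subgroup G) :
    IsDefectGroup p b P ↔ IsDefectGroup p b' P := by
  have hmap : map (algebraMap K L : K →+ L) b' = galOrbitSum K b := coeff_injective hb'
  refine isDefectGroup_iff_of_Br_ne_zero_iff (fun Q hQ => not_congr ?_) P
  rw [← Br_galOrbitSum_eq_zero_iff K hQ hb, ← hmap, Br_map]
  exact (map_injective _ (algebraMap K L).injective).eq_iff' (MonoidAlgebra.map_zero _)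

/-- Let `L/K` be a finite Galois extension of fields of characteristic `p > 0`,
`b` a block idempotent of `LG` and `b'` the corresponding block idempotent of `KG` (whose image
in `LG` is the sum `b̃` of the distinct Galois conjugates of `b`). Then `b` and `b'` have the
same defect groups. -/
theorem block_and_galOrbitSum_same_defect_groups
    (p : ℕ) [Fact p.Prime]
    (K L : Type*) [Field K] [Field L] [Algebra K L] [FiniteDimensional K L] [IsGalois K L]
    [CharP K p] [CharP L p]
    (G : Type*) [Group G] [Fintype G]
    (b : MonoidAlgebra L G) (hb : IsBlockIdempotent b)
    (b' : MonoidAlgebra K G)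
    (hb' : Finsupp.mapRange (algebraMap K L) (map_zero _) b'.coeff = (galOrbitSum K b).coeff)
    (P : Subgroup G) :
    IsDefectGroup p b P ↔ IsDefectGroup p b' P :=
  block_and_galOrbitSum_same_defect_groups_general p K L G b hb b' hb' P
end

section
/- Let F ⊆ F̃ be fusion systems over a finite p-group P and let σ ∈ Aut_{F̃}(P) be such that any two F̃-isomorphic subgroups Q, Q' of P satisfy: there exist Q'' ≤ P and i ∈ ℤ with Q F-isomorphic to Q'' and Q' = σ^i(Q''). Then a subgroup Q of P is F-centric if and only if it is F̃-centric. -/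
/-- The condition that conjugation by `x` maps the subgroup `Q` into the subgroup `R`. -/
def ConjMapsTo {P : Type*} [Group P] (x : P) (Q R : Subgroup P) : Prop :=
  ∀ q ∈ Q, x * q * x⁻¹ ∈ R

/-- The homomorphism `Q → R` induced by conjugation by `x`. -/
def conjHom {P : Type*} [Group P] (x : P) (Q R : Subgroup P) (h : ConjMapsTo x Q R) :
    ↥Q →* ↥R where
  toFun q := ⟨x * q * x⁻¹, h q q.2⟩
  map_one' := by ext; simp
  map_mul' a b := by ext; simp [mul_assoc]
  
/-- The image `φ(Q) ≤ P` of a homomorphism `φ : Q → R` between subgroups of `P`. -/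
def imgSubgroup {P : Type*} [Group P] {Q R : Subgroup P} (φ : ↥Q →* ↥R) : Subgroup P :=
  (R.subtype.comp φ).range

/-- The corestriction `Q → φ(Q)`, `u ↦ φ(u)`, of `φ : Q → R`. -/
def corestrict {P : Type*} [Group P] {Q R : Subgroup P} (φ : ↥Q →* ↥R) :
    ↥Q →* ↥(imgSubgroup φ) :=
  (R.subtype.comp φ).rangeRestrict

/-- A fusion system over a finite `p`-group `P` (Definition I.2.1 of Aschbacher–Kessar–Oliver):
a category whose objects are the subgroups of `P` and whose morphisms are injective group
homomorphisms, including all conjugation maps induced by elements of `P`, closed under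
composition, and such that each morphism factors as an isomorphism onto its image whose
inverse is again a morphism. -/
structure FusionSystem (P : Type*) [Group P] where
  Hom : ∀ _Q _R : Subgroup P, Set (↥_Q →* ↥_R)
  inj_mem : ∀ {Q R : Subgroup P}, ∀ φ ∈ Hom Q R, Function.Injective φ
  conj_mem : ∀ (x : P) (Q R : Subgroup P) (h : ConjMapsTo x Q R), conjHom x Q R h ∈ Hom Q R
  comp_mem : ∀ {Q R S : Subgroup P}, ∀ φ ∈ Hom Q R, ∀ ψ ∈ Hom R S, ψ.comp φ ∈ Hom Q S
  restrict_mem : ∀ {Q R : Subgroup P}, ∀ φ ∈ Hom Q R, corestrict φ ∈ Hom Q (imgSubgroup φ)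
  inv_mem : ∀ {Q R : Subgroup P}, ∀ φ ∈ Hom Q R,
    ∃ ψ ∈ Hom (imgSubgroup φ) Q, ∀ q : ↥Q, ψ (corestrict φ q) = q

namespace FusionSystem

variable {P : Type*} [Group P]

/-- Containment of fusion systems over `P`. -/
def LE (F F' : FusionSystem P) : Prop := ∀ Q R : Subgroup P, F.Hom Q R ⊆ F'.Hom Q R

/-- `Q` and `R` are `F`-isomorphic: some morphism in `Hom_F(Q,R)` is an isomorphism. -/
def IsIso (F : FusionSystem P) (Q R : Subgroup P) : Prop :=
  ∃ φ ∈ F.Hom Q R, Function.Surjective φ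

/-- `Q` is fully `F`-centralized: `|C_P(Q)| ≥ |C_P(Q')|` for all `Q'` `F`-isomorphic to `Q`. -/
def FullyCentralized (F : FusionSystem P) (Q : Subgroup P) : Prop :=
  ∀ Q' : Subgroup P, F.IsIso Q Q' →
    Nat.card ↥(Subgroup.centralizer (Q' : Set P)) ≤ Nat.card ↥(Subgroup.centralizer (Q : Set P))

/-- `Q` is fully `F`-normalized: `|N_P(Q)| ≥ |N_P(Q')|` for all `Q'` `F`-isomorphic to `Q`. -/
def FullyNormalized (F : FusionSystem P) (Q : Subgroup P) : Prop :=
  ∀ Q' : Subgroup P, F.IsIso Q Q' → Nat.card ↥(Subgroup.normalizer (Q' : Set P)) ≤ Nat.card ↥(Subgroup.normalizer (Q : Set P))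

/-- `Q` is `F`-centric: `C_P(R) = Z(R)` for all `R` `F`-isomorphic to `Q`. -/
def Centric (F : FusionSystem P) (Q : Subgroup P) : Prop :=
  ∀ R : Subgroup P, F.IsIso Q R →
    Subgroup.centralizer (R : Set P) = R ⊓ Subgroup.centralizer (R : Set P)

end FusionSystem

/-- An automorphism `σ` of `P`, as a morphism `P → P` (i.e. `⊤ → ⊤`). -/
def topHom {P : Type*} [Group P] (σ : MulAut P) : ↥(⊤ : Subgroup P) →* ↥(⊤ : Subgroup P) :=
  (σ.toMonoidHom.comp (⊤ : Subgroup P).subtype).codRestrict ⊤ (fun _ => trivial)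

theorem Subgroup.centralizer_map_mulEquiv {G G' : Type*} [Group G] [Group G'] (e : G ≃* G')
    (H : Subgroup G) :
    centralizer (H.map e.toMonoidHom : Set G') = (centralizer (H : Set G)).map e.toMonoidHom := by
  refine le_antisymm (fun x hx => ?_) ?_
  · refine ⟨e.symm x, fun h hh => e.injective ?_, e.apply_symm_apply x⟩
    simpa using hx (e h) ⟨h, hh, rfl⟩
  · simpa using map_centralizer_le_centralizer_image (H : Set G) e.toMonoidHom

theorem Subgroup.centralizer_map_le_map_mulEquiv {G : Type*} [Group G] (e : G ≃* G)
    {H : Subgroup G} (h : centralizer (H : Set G) ≤ H) :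
    centralizer (H.map e.toMonoidHom : Set G) ≤ H.map e.toMonoidHom := by
  rw [centralizer_map_mulEquiv]
  exact Subgroup.map_mono h

namespace FusionSystem

variable {P : Type*} [Group P]

theorem centric_iff {F : FusionSystem P} {Q : Subgroup P} :
    F.Centric Q ↔ ∀ R : Subgroup P, F.IsIso Q R → Subgroup.centralizer (R : Set P) ≤ R :=
  forall₂_congr fun _ _ => right_eq_inf

theorem Centric.of_le {F F' : FusionSystem P} (hle : F.LE F') {Q : Subgroup P}
    (hQ : F'.Centric Q) : F.Centric Q :=
  fun R ⟨φ, hφ, hsurj⟩ => hQ R ⟨φ, hle Q R hφ, hsurj⟩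

end FusionSystem

theorem centric_F_iff_Ftilde_general
    (P : Type*) [Group P]
    (F Ftilde : FusionSystem P) (hle : FusionSystem.LE F Ftilde)
    (σ : MulAut P)
    (hiso : ∀ Q Q' : Subgroup P, Ftilde.IsIso Q Q' →
      ∃ (Q'' : Subgroup P) (i : ℤ), F.IsIso Q Q'' ∧ Q' = Q''.map (σ ^ i).toMonoidHom) :
    ∀ Q : Subgroup P, F.Centric Q ↔ Ftilde.Centric Q := by
  intro Q
  refine ⟨fun hQ => FusionSystem.centric_iff.mpr fun R hQR => ?_, fun hQ => hQ.of_le hle⟩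
  obtain ⟨Q'', i, hQQ'', rfl⟩ := hiso Q R hQR
  have hQ'' := FusionSystem.centric_iff.mp hQ Q'' hQQ''
  exact Subgroup.centralizer_map_le_map_mulEquiv (σ ^ i) hQ''

/-- Let `F ⊆ F̃` be fusion systems over a finite `p`-group `P` and
`σ ∈ Aut_F̃(P)` be such that any two `F̃`-isomorphic subgroups `Q, Q'` satisfy: there are
`Q'' ≤ P` and `i ∈ ℤ` with `Q` `F`-isomorphic to `Q''` and `Q' = σ^i(Q'')`. Then a subgroup `Q`
of `P` is `F`-centric iff it is `F̃`-centric. -/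
theorem centric_F_iff_Ftilde
    (p : ℕ) [Fact p.Prime] (P : Type*) [Group P] [Finite P] (hP : IsPGroup p P)
    (F Ftilde : FusionSystem P) (hle : FusionSystem.LE F Ftilde)
    (σ : MulAut P) (hσ : topHom σ ∈ Ftilde.Hom ⊤ ⊤)
    (hiso : ∀ Q Q' : Subgroup P, Ftilde.IsIso Q Q' →
      ∃ (Q'' : Subgroup P) (i : ℤ), F.IsIso Q Q'' ∧ Q' = Q''.map (σ ^ i).toMonoidHom) :
    ∀ Q : Subgroup P, F.Centric Q ↔ Ftilde.Centric Q :=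
  centric_F_iff_Ftilde_general P F Ftilde hle σ hiso
end
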